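/- arXiv:math/0003024 — 6 statements merged into one kernel-verified Lean document; each statement's English description precedes it below -/
import Mathlib

section
/- If p̄₁ p₂ lies in the subfield ℂ = ℝ ⊕ ℝ i of ℍ and (p₁,p₂) ≠ (0,0), then the kernel of T = T_{p₁,p₂} is invariant under the complex structure induced by left quaternionic multiplication by i: if (u₁,u₂) ∈ Ker T then (i u₁, i u₂) ∈ Ker T. -/
/-- The linear part `T(u₁,u₂) = p₁u₁ + p₂u₂` of the map `τ` used to superpose
NS-5-branes. -/
noncomputable def braneMap (p₁ p₂ : Quaternion ℝ) (u : Quaternion ℝ × Quaternion ℝ) : Quaternion ℝ :=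
  p₁ * u.1 + p₂ * u.2

/-- The imaginary unit `i` of the quaternions. -/
def quatI : Quaternion ℝ := ⟨0, 1, 0, 0⟩

/-! If `p₁ ≠ 0`, the kernel equation reads `p₁ (u₁ + q u₂) = 0` with `q = p₁⁻¹ p₂`, and
`q = |p₁|⁻² p̄₁ p₂` is complex, hence commutes with `i`. Therefore
`p₁ (i u₁) + p₂ (i u₂) = p₁ i (u₁ + q u₂) = 0`. If `p₁ = 0`, the kernel equation
`p₂ u₂ = 0` forces `p₂ = 0` or `u₂ = 0`. -/

theorem mul_mul_add_mul_mul_eq_zero_of_commute {R : Type*} [Ring R] [NoZeroDivisors R]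
    {p q x u₁ u₂ : R} (hx : Commute x q) (hu : p * u₁ + p * q * u₂ = 0) :
    p * (x * u₁) + p * q * (x * u₂) = 0 := by
  have hfactor : p * (x * u₁) + p * q * (x * u₂) = p * x * (u₁ + q * u₂) := by
    rw [mul_assoc p q, ← mul_assoc q, ← hx.eq]
    noncomm_ring
  rw [mul_assoc, ← mul_add] at hu
  rcases mul_eq_zero.mp hu with hp | hsum
  · simp [hp]
  · rw [hfactor, hsum, mul_zero]

theorem mul_mul_eq_zero_of_mul_eq_zero {R : Type*} [MulZeroClass R] [NoZeroDivisors R]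
    {p u : R} (x : R) (hu : p * u = 0) : p * (x * u) = 0 := by
  rcases mul_eq_zero.mp hu with hp | hu
  · rw [hp, zero_mul]
  · rw [hu, mul_zero, mul_zero]

namespace Quaternion

theorem commute_quatI_coe_add_coe_mul_quatI (a b : ℝ) :
    Commute quatI ((a : ℍ[ℝ]) + (b : ℍ[ℝ]) * quatI) :=
  ((coe_commute a quatI).symm).add_right (((coe_commute b quatI).symm).mul_right (.refl _))

theorem commute_inv_mul_of_commute_star_mul {x p r : ℍ[ℝ]} (h : Commute x (star p * r)) :
    Commute x (p⁻¹ * r) := by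
  rw [inv_def, smul_mul_assoc]
  exact h.smul_right _

end Quaternion

theorem braneMap_ker_leftI_invariant_of_complex_general
    (p₁ p₂ : Quaternion ℝ)
    (hcplx : ∃ a b : ℝ, star p₁ * p₂ = (a : Quaternion ℝ) + (b : Quaternion ℝ) * quatI) :
    ∀ u : Quaternion ℝ × Quaternion ℝ, braneMap p₁ p₂ u = 0 →
      braneMap p₁ p₂ (quatI * u.1, quatI * u.2) = 0 := by
  rintro ⟨u₁, u₂⟩ hu
  obtain ⟨a, b, hab⟩ := hcplx
  simp only [braneMap] at hu ⊢
  by_cases hp₁ : p₁ = 0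
  · subst hp₁
    simp only [zero_mul, zero_add] at hu ⊢
    exact mul_mul_eq_zero_of_mul_eq_zero quatI hu
  · have hp₂ : p₁ * (p₁⁻¹ * p₂) = p₂ := mul_inv_cancel_left₀ hp₁ p₂
    have hcomm : Commute quatI (p₁⁻¹ * p₂) :=
      Quaternion.commute_inv_mul_of_commute_star_mul
        (hab ▸ Quaternion.commute_quatI_coe_add_coe_mul_quatI a b)
    rw [← hp₂] at hu ⊢
    exact mul_mul_add_mul_mul_eq_zero_of_commute hcomm hu

/-- If `p̄₁ p₂` lies in the subfield `ℂ = ℝ ⊕ ℝi` of ℍ and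
`(p₁,p₂) ≠ (0,0)`, then the kernel of `T = T_{p₁,p₂}` is invariant under the
complex structure induced by left quaternionic multiplication by `i`:
if `(u₁,u₂) ∈ Ker T` then `(i u₁, i u₂) ∈ Ker T`. -/
theorem braneMap_ker_leftI_invariant_of_complex
    (p₁ p₂ : Quaternion ℝ) (h : (p₁, p₂) ≠ (0, 0))
    (hcplx : ∃ a b : ℝ, star p₁ * p₂ = (a : Quaternion ℝ) + (b : Quaternion ℝ) * quatI) :
    ∀ u : Quaternion ℝ × Quaternion ℝ, braneMap p₁ p₂ u = 0 →
      braneMap p₁ p₂ (quatI * u.1, quatI * u.2) = 0 :=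
  braneMap_ker_leftI_invariant_of_complex_general p₁ p₂ hcplx
end

section
/- The superposed intersecting NS-5-brane metric is hermitian with respect to the hypercomplex structure J induced by right quaternionic multiplication: given finitely many triples (p₁ˢ, p₂ˢ, aˢ) with (p₁ˢ,p₂ˢ) ≠ (0,0) and constants r_s > 0, let τ_s(x) = p₁ˢx₁ + p₂ˢx₂ − aˢ with linear part T_s, and on K = {x ∈ ℍ² : τ_s(x) ≠ 0 for all s} define g_x(v,w) = ⟪v,w⟫ + Σ_s r_s² ⟪T_s(v), T_s(w)⟫ / ‖τ_s(x)‖². Then g_x(J_r v, J_r w) = g_x(v,w) for all x ∈ K, all v,w ∈ ℍ², and r = 1,2,3. -/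
open RealInnerProductSpace

/-- The imaginary units of the quaternions. -/
def quatUnit : Fin 3 → Quaternion ℝ :=
  ![⟨0, 1, 0, 0⟩, ⟨0, 0, 1, 0⟩, ⟨0, 0, 0, 1⟩]

/-- The real inner product on ℍ², `⟪u,v⟫ = Re(ū₁v₁) + Re(ū₂v₂)`. -/
noncomputable def innerH2 (u v : Quaternion ℝ × Quaternion ℝ) : ℝ :=
  ⟪u.1, v.1⟫ + ⟪u.2, v.2⟫

/-! Right multiplication by a unit quaternion `u` scales the inner product of `ℍ` by `‖u‖² = 1`,
so each `J_r` is an isometry of `ℍ` and of `ℍ²`. Since `T_s` is built from left multiplications,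
it commutes with right multiplication: `T_s (J_r v) = J_r (T_s v)`. Hence every term of `g_x` is
`J_r`-invariant, whatever the denominators `‖τ_s x‖²` are. -/

theorem Quaternion.inner_mul_right_mul_right (a b u : Quaternion ℝ) :
    ⟪a * u, b * u⟫ = Quaternion.normSq u * ⟪a, b⟫ := by
  have h : a * u * star (b * u) = Quaternion.normSq u • (a * star b) := by
    rw [star_mul, mul_assoc, ← mul_assoc u, Quaternion.self_mul_star,
      Quaternion.coe_mul_eq_smul, mul_smul_comm]
  rw [Quaternion.inner_def, Quaternion.inner_def, h, Quaternion.re_smul, smul_eq_mul]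

theorem normSq_quatUnit (r : Fin 3) : Quaternion.normSq (quatUnit r) = 1 := by
  rw [Quaternion.normSq_def']
  fin_cases r <;> simp [quatUnit]

theorem inner_neg_mul_quatUnit (r : Fin 3) (a b : Quaternion ℝ) :
    ⟪-(a * quatUnit r), -(b * quatUnit r)⟫ = ⟪a, b⟫ := by
  rw [inner_neg_neg, Quaternion.inner_mul_right_mul_right, normSq_quatUnit, one_mul]

theorem innerH2_neg_mul_quatUnit (r : Fin 3) (u v : Quaternion ℝ × Quaternion ℝ) :
    innerH2 (-(u.1 * quatUnit r), -(u.2 * quatUnit r)) (-(v.1 * quatUnit r), -(v.2 * quatUnit r))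
      = innerH2 u v := by
  simp only [innerH2, inner_neg_mul_quatUnit]

theorem mul_neg_mul_add_mul_neg_mul {R : Type*} [Ring R] (p₁ p₂ u₁ u₂ q : R) :
    p₁ * -(u₁ * q) + p₂ * -(u₂ * q) = -((p₁ * u₁ + p₂ * u₂) * q) := by
  noncomm_ring

theorem superposed_ns5brane_metric_hermitian_right_general
    (n : ℕ) (p₁ p₂ a : Fin n → Quaternion ℝ) (rs : Fin n → ℝ) :
    ∀ x : Quaternion ℝ × Quaternion ℝ,
      (∀ s, p₁ s * x.1 + p₂ s * x.2 - a s ≠ 0) →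
      ∀ v w : Quaternion ℝ × Quaternion ℝ, ∀ r : Fin 3,
        (innerH2 (-(v.1 * quatUnit r), -(v.2 * quatUnit r))
            (-(w.1 * quatUnit r), -(w.2 * quatUnit r)) +
          ∑ s, (rs s) ^ 2 *
            ⟪p₁ s * -(v.1 * quatUnit r) + p₂ s * -(v.2 * quatUnit r),
              p₁ s * -(w.1 * quatUnit r) + p₂ s * -(w.2 * quatUnit r)⟫ /
              ‖p₁ s * x.1 + p₂ s * x.2 - a s‖ ^ 2) =
        (innerH2 v w +
          ∑ s, (rs s) ^ 2 *
            ⟪p₁ s * v.1 + p₂ s * v.2, p₁ s * w.1 + p₂ s * w.2⟫ /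
              ‖p₁ s * x.1 + p₂ s * x.2 - a s‖ ^ 2) := by
  intro x _ v w r
  simp only [innerH2_neg_mul_quatUnit, mul_neg_mul_add_mul_neg_mul, inner_neg_mul_quatUnit]

/-- The superposed intersecting NS-5-brane metric
`g_x(v,w) = ⟪v,w⟫ + Σ_s r_s² ⟪T_s v, T_s w⟫ / ‖τ_s x‖²` on
`K = {x ∈ ℍ² : τ_s(x) ≠ 0 for all s}` is hermitian with respect to the
hypercomplex structure `J` induced by right quaternionic multiplication,
acting componentwise on ℍ². -/
theorem superposed_ns5brane_metric_hermitian_right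
    (n : ℕ) (p₁ p₂ a : Fin n → Quaternion ℝ) (rs : Fin n → ℝ)
    (hp : ∀ s, (p₁ s, p₂ s) ≠ (0, 0)) (hr : ∀ s, 0 < rs s) :
    ∀ x : Quaternion ℝ × Quaternion ℝ,
      (∀ s, p₁ s * x.1 + p₂ s * x.2 - a s ≠ 0) →
      ∀ v w : Quaternion ℝ × Quaternion ℝ, ∀ r : Fin 3,
        (innerH2 (-(v.1 * quatUnit r), -(v.2 * quatUnit r))
            (-(w.1 * quatUnit r), -(w.2 * quatUnit r)) +
          ∑ s, (rs s) ^ 2 *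
            ⟪p₁ s * -(v.1 * quatUnit r) + p₂ s * -(v.2 * quatUnit r),
              p₁ s * -(w.1 * quatUnit r) + p₂ s * -(w.2 * quatUnit r)⟫ /
              ‖p₁ s * x.1 + p₂ s * x.2 - a s‖ ^ 2) =
        (innerH2 v w +
          ∑ s, (rs s) ^ 2 *
            ⟪p₁ s * v.1 + p₂ s * v.2, p₁ s * w.1 + p₂ s * w.2⟫ /
              ‖p₁ s * x.1 + p₂ s * x.2 - a s‖ ^ 2) :=
  superposed_ns5brane_metric_hermitian_right_general n p₁ p₂ a rs
end

section
/- If in the superposed intersecting NS-5-brane metric every pair of parameters satisfies the reality condition p̄₁ˢ p₂ˢ ∈ ℝ, then the metric is hermitian with respect to the hypercomplex structure I induced by left quaternionic multiplication as well: with τ_s(x) = p₁ˢx₁ + p₂ˢx₂ − aˢ, (p₁ˢ,p₂ˢ) ≠ (0,0), linear parts T_s, constants r_s > 0, and g_x(v,w) = ⟪v,w⟫ + Σ_s r_s² ⟪T_s(v), T_s(w)⟫ / ‖τ_s(x)‖² on K = {x ∈ ℍ² : τ_s(x) ≠ 0 for all s}, one has g_x(I_r v, I_r w) = g_x(v,w)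 for all x ∈ K, all v,w ∈ ℍ², and r = 1,2,3, where I_r(u₁,u₂) = (e_r u₁, e_r u₂) and (e₁,e₂,e₃) = (i,j,k). -/
/-!
Expanding `⟪T v, T w⟫` gives the four terms `⟪pᵢ vᵢ, pⱼ wⱼ⟫ = Re(p̄ⱼ pᵢ · vᵢ w̄ⱼ)`. The
coefficients `p̄ⱼ pᵢ` are `|p₁|²`, `|p₂|²`, `p̄₁ p₂` and its conjugate, all real by hypothesis, so
each term is a real multiple of `⟪vᵢ, wⱼ⟫`; and left multiplication by a unit quaternion `e_r`
preserves `⟪·,·⟫` on `ℍ`.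
-/

open RealInnerProductSpace

namespace Quaternion

lemma re_mul_comm (a b : ℍ[ℝ]) : (a * b).re = (b * a).re := by
  simp only [re_mul]; ring

lemma inner_mul_mul_of_star_mul_eq_coe {p q : ℍ[ℝ]} {c : ℝ} (h : star q * p = c)
    (x y : ℍ[ℝ]) : ⟪p * x, q * y⟫ = c * ⟪x, y⟫ := by
  rw [inner_def, inner_def, star_mul]
  calc (p * x * (star y * star q)).re = (star q * p * (x * star y)).re := by
        simp only [mul_assoc]; rw [re_mul_comm (star q)]; simp only [mul_assoc]
    _ = c * (x * star y).re := by rw [h, coe_mul_eq_smul, re_smul, smul_eq_mul]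

lemma inner_mul_left_mul_left_of_star_mul_self {e : ℍ[ℝ]} (he : star e * e = 1)
    (x y : ℍ[ℝ]) : ⟪e * x, e * y⟫ = ⟪x, y⟫ := by
  simpa using inner_mul_mul_of_star_mul_eq_coe (c := 1) (by simpa using he) x y

lemma inner_mul_mul_left_mul_left {p q e : ℍ[ℝ]} {c : ℝ} (h : star q * p = c)
    (he : star e * e = 1) (x y : ℍ[ℝ]) :
    ⟪p * (e * x), q * (e * y)⟫ = ⟪p * x, q * y⟫ := by
  rw [inner_mul_mul_of_star_mul_eq_coe h, inner_mul_mul_of_star_mul_eq_coe h,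
    inner_mul_left_mul_left_of_star_mul_self he]

end Quaternion

open Quaternion

lemma star_quatUnit_mul_self (r : Fin 3) : star (quatUnit r) * quatUnit r = 1 := by
  rw [star_mul_self, ← coe_one, coe_inj, normSq_def']
  fin_cases r <;> simp [quatUnit]

lemma inner_linear_mul_left_mul_left {p₁ p₂ e : ℍ[ℝ]} {c : ℝ}
    (hc : star p₁ * p₂ = c) (he : star e * e = 1) (u w : ℍ[ℝ] × ℍ[ℝ]) :
    ⟪p₁ * (e * u.1) + p₂ * (e * u.2), p₁ * (e * w.1) + p₂ * (e * w.2)⟫ =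
      ⟪p₁ * u.1 + p₂ * u.2, p₁ * w.1 + p₂ * w.2⟫ := by
  have hc' : star p₂ * p₁ = c := by simpa using congrArg star hc
  simp only [inner_add_left, inner_add_right,
    inner_mul_mul_left_mul_left (star_mul_self p₁) he,
    inner_mul_mul_left_mul_left (star_mul_self p₂) he,
    inner_mul_mul_left_mul_left hc he, inner_mul_mul_left_mul_left hc' he]

lemma innerH2_mul_left_mul_left {e : ℍ[ℝ]} (he : star e * e = 1) (u w : ℍ[ℝ] × ℍ[ℝ]) :
    innerH2 (e * u.1, e * u.2) (e * w.1, e * w.2) = innerH2 u w := by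
  simp only [innerH2, inner_mul_left_mul_left_of_star_mul_self he]

theorem superposed_ns5brane_metric_hermitian_left_of_real_general
    (n : ℕ) (p₁ p₂ a : Fin n → Quaternion ℝ) (rs : Fin n → ℝ)
    (hreal : ∀ s, ∃ c : ℝ, star (p₁ s) * p₂ s = (c : Quaternion ℝ)) :
    ∀ x : Quaternion ℝ × Quaternion ℝ,
      (∀ s, p₁ s * x.1 + p₂ s * x.2 - a s ≠ 0) →
      ∀ v w : Quaternion ℝ × Quaternion ℝ, ∀ r : Fin 3,
        (innerH2 (quatUnit r * v.1, quatUnit r * v.2)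
            (quatUnit r * w.1, quatUnit r * w.2) +
          ∑ s, (rs s) ^ 2 *
            ⟪p₁ s * (quatUnit r * v.1) + p₂ s * (quatUnit r * v.2),
              p₁ s * (quatUnit r * w.1) + p₂ s * (quatUnit r * w.2)⟫ /
              ‖p₁ s * x.1 + p₂ s * x.2 - a s‖ ^ 2) =
        (innerH2 v w +
          ∑ s, (rs s) ^ 2 *
            ⟪p₁ s * v.1 + p₂ s * v.2, p₁ s * w.1 + p₂ s * w.2⟫ /
              ‖p₁ s * x.1 + p₂ s * x.2 - a s‖ ^ 2) := by
  intro x _ v w r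
  have he := star_quatUnit_mul_self r
  rw [innerH2_mul_left_mul_left he]
  congr 1
  refine Finset.sum_congr rfl fun s _ => ?_
  obtain ⟨c, hc⟩ := hreal s
  rw [inner_linear_mul_left_mul_left hc he]

/-- If every pair of parameters satisfies the reality condition
`p̄₁ˢ p₂ˢ ∈ ℝ`, then the superposed intersecting NS-5-brane metric
`g_x(v,w) = ⟪v,w⟫ + Σ_s r_s² ⟪T_s v, T_s w⟫ / ‖τ_s x‖²` on
`K = {x ∈ ℍ² : τ_s(x) ≠ 0 for all s}` is hermitian with respect to the
hypercomplex structure `I` induced by left quaternionic multiplication as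
well, where `I_r(u₁,u₂) = (e_r u₁, e_r u₂)`. -/
theorem superposed_ns5brane_metric_hermitian_left_of_real
    (n : ℕ) (p₁ p₂ a : Fin n → Quaternion ℝ) (rs : Fin n → ℝ)
    (hp : ∀ s, (p₁ s, p₂ s) ≠ (0, 0)) (hr : ∀ s, 0 < rs s)
    (hreal : ∀ s, ∃ c : ℝ, star (p₁ s) * p₂ s = (c : Quaternion ℝ)) :
    ∀ x : Quaternion ℝ × Quaternion ℝ,
      (∀ s, p₁ s * x.1 + p₂ s * x.2 - a s ≠ 0) →
      ∀ v w : Quaternion ℝ × Quaternion ℝ, ∀ r : Fin 3,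
        (innerH2 (quatUnit r * v.1, quatUnit r * v.2)
            (quatUnit r * w.1, quatUnit r * w.2) +
          ∑ s, (rs s) ^ 2 *
            ⟪p₁ s * (quatUnit r * v.1) + p₂ s * (quatUnit r * v.2),
              p₁ s * (quatUnit r * w.1) + p₂ s * (quatUnit r * w.2)⟫ /
              ‖p₁ s * x.1 + p₂ s * x.2 - a s‖ ^ 2) =
        (innerH2 v w +
          ∑ s, (rs s) ^ 2 *
            ⟪p₁ s * v.1 + p₂ s * v.2, p₁ s * w.1 + p₂ s * w.2⟫ /
              ‖p₁ s * x.1 + p₂ s * x.2 - a s‖ ^ 2) :=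
  superposed_ns5brane_metric_hermitian_left_of_real_general n p₁ p₂ a rs hreal
end

section
/- Every quaternionic line in ℍ² is calibrated by the quaternionic calibration form φ_J: for every u ∈ ℍ² with ⟪u,u⟫ = 1, the four vectors u, J₁u, J₂u, J₃u form an orthonormal family in ℍ², and φ_J(u, J₁u, J₂u, J₃u) = 1. -/
/-! The vectors `u, J₁u, J₂u, J₃u` are `u·1, u·(-i), u·(-j), u·(-k)`, and left multiplication
by a quaternion `p` scales the inner product of `ℍ` by `|p|²`. Hence every inner product and
every value `ω_r(u·a, u·b)` on the quaternionic line `u·ℍ` is `⟪u,u⟫` times the corresponding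
quantity on `ℍ` itself, where the frame `1, -i, -j, -k` is orthonormal and `φ_J` evaluates to `1`
by a finite computation. -/

open RealInnerProductSpace

/-- The hypercomplex structure on ℍ² given by componentwise right quaternionic
multiplication, `J_r(u₁,u₂) = (-u₁ e_r, -u₂ e_r)`. -/
noncomputable def Jact (r : Fin 3) (u : Quaternion ℝ × Quaternion ℝ) : Quaternion ℝ × Quaternion ℝ :=
  (-(u.1 * quatUnit r), -(u.2 * quatUnit r))

/-- The Kähler two-forms `ω_r(u,v) = ⟪J_r u, v⟫` on ℍ². -/
noncomputable def omegaJ (r : Fin 3) (u v : Quaternion ℝ × Quaternion ℝ) : ℝ :=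
  innerH2 (Jact r u) v

/-- The quaternionic calibration form `φ_J = (1/3) Σ_r ω_{J_r} ∧ ω_{J_r}`,
evaluated on four vectors. -/
noncomputable def phiJ (e₁ e₂ e₃ e₄ : Quaternion ℝ × Quaternion ℝ) : ℝ :=
  (1 / 3) * ∑ r : Fin 3,
    (omegaJ r e₁ e₂ * omegaJ r e₃ e₄ - omegaJ r e₁ e₃ * omegaJ r e₂ e₄ +
      omegaJ r e₁ e₄ * omegaJ r e₂ e₃)

open Quaternion MulOpposite
open scoped RightActions

theorem Quaternion.inner_mul_mul_left (p a b : ℍ) :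
    ⟪p * a, p * b⟫ = normSq p * ⟪a, b⟫ := by
  simp only [inner_def, re_mul, star_mul, normSq_def', imI_mul, imJ_mul, imK_mul, re_star,
    imI_star, imJ_star, imK_star]
  ring

@[simp] theorem quatUnit_re (r : Fin 3) : (quatUnit r).re = 0 := by fin_cases r <;> rfl

@[simp] theorem quatUnit_imI (r : Fin 3) : (quatUnit r).imI = if r = 0 then 1 else 0 := by
  fin_cases r <;> rfl

@[simp] theorem quatUnit_imJ (r : Fin 3) : (quatUnit r).imJ = if r = 1 then 1 else 0 := by
  fin_cases r <;> rfl

@[simp] theorem quatUnit_imK (r : Fin 3) : (quatUnit r).imK = if r = 2 then 1 else 0 := by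
  fin_cases r <;> rfl

theorem Jact_eq_op_smul (r : Fin 3) (u : ℍ × ℍ) : Jact r u = u <• -quatUnit r := by
  simp [Jact, Prod.smul_def]

theorem innerH2_op_smul_op_smul (u : ℍ × ℍ) (a b : ℍ) :
    innerH2 (u <• a) (u <• b) = innerH2 u u * ⟪a, b⟫ := by
  simp only [innerH2, Prod.smul_fst, Prod.smul_snd, op_smul_eq_mul, inner_mul_mul_left,
    inner_self]
  ring

theorem omegaJ_op_smul_op_smul (r : Fin 3) (u : ℍ × ℍ) (a b : ℍ) :
    omegaJ r (u <• a) (u <• b) = innerH2 u u * ⟪-(a * quatUnit r), b⟫ := by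
  rw [omegaJ, Jact_eq_op_smul, smul_smul, ← op_mul, innerH2_op_smul_op_smul, mul_neg]

noncomputable def quatFrame : Fin 4 → ℍ :=
  ![1, -quatUnit 0, -quatUnit 1, -quatUnit 2]

theorem inner_quatFrame (a b : Fin 4) :
    ⟪quatFrame a, quatFrame b⟫ = if a = b then 1 else 0 := by
  rw [inner_def]
  fin_cases a <;> fin_cases b <;> simp [quatFrame, re_mul]

theorem quaternionicLine_eq_op_smul (u : ℍ × ℍ) :
    ![u, Jact 0 u, Jact 1 u, Jact 2 u] = fun a => u <• quatFrame a := by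
  ext a : 1
  fin_cases a <;> simp [quatFrame, Jact_eq_op_smul]

theorem innerH2_quaternionicLine (u : ℍ × ℍ) (a b : Fin 4) :
    innerH2 (![u, Jact 0 u, Jact 1 u, Jact 2 u] a) (![u, Jact 0 u, Jact 1 u, Jact 2 u] b) =
      innerH2 u u * if a = b then 1 else 0 := by
  rw [quaternionicLine_eq_op_smul, innerH2_op_smul_op_smul, inner_quatFrame]

theorem phiJ_quaternionicLine (u : ℍ × ℍ) :
    phiJ u (Jact 0 u) (Jact 1 u) (Jact 2 u) = innerH2 u u ^ 2 := by
  simp only [Jact_eq_op_smul]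
  nth_rw 1 [← one_smul ℍᵐᵒᵖ u, ← op_one]
  -- For `(r, s, t)` cyclic, `ω_r(u, J_r u) = ω_r(J_s u, J_t u) = ⟪u,u⟫`,
  -- and `ω_r(u, J_s u) = 0` for `s ≠ r`.
  simp only [phiJ, omegaJ_op_smul_op_smul, Fin.sum_univ_three, inner_def]
  simp [re_mul, imI_mul, imJ_mul, imK_mul]
  ring

/-- Every quaternionic line in ℍ² is calibrated by `φ_J`:
for every unit vector `u ∈ ℍ²`, the four vectors `u, J₁u, J₂u, J₃u` are an
orthonormal family and `φ_J(u, J₁u, J₂u, J₃u) = 1`. -/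
theorem quaternionic_line_calibrated (u : Quaternion ℝ × Quaternion ℝ)
    (hu : innerH2 u u = 1) :
    (∀ a b : Fin 4,
        innerH2 (![u, Jact 0 u, Jact 1 u, Jact 2 u] a)
            (![u, Jact 0 u, Jact 1 u, Jact 2 u] b) =
          if a = b then 1 else 0) ∧
    phiJ u (Jact 0 u) (Jact 1 u) (Jact 2 u) = 1 := by
  refine ⟨fun a b => ?_, ?_⟩
  · rw [innerH2_quaternionicLine, hu, one_mul]
  · rw [phiJ_quaternionicLine, hu, one_pow]
end

section
/- The form φ_J is a calibration on ℝ⁸ = ℍ² whose contact set is the Grassmannian Gr(1;ℍ²) of quaternionic lines: for every orthonormal family e₁, e₂, e₃, e₄ in ℍ² one has φ_J(e₁,e₂,e₃,e₄) ≤ 1, and if φ_J(e₁,e₂,e₃,e₄) = 1 then the real span of e₁, e₂, e₃, e₄ is closed under J₁, J₂, J₃, i.e. it is a quaternionic line in ℍ². -/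
open RealInnerProductSpace

/-!
Everything is governed by the quaternion-valued Hermitian form `h(u,v) = ū₁v₁ + ū₂v₂` on `ℍ²`:
`Σ_r ω_r(u,v) ω_r(w,x) = ⟪Im h(u,v), Im h(w,x)⟫`, so `3 φ_J(e₁,e₂,e₃,e₄)` is a signed sum of
three such inner products. For unit vectors Cauchy–Schwarz gives `‖h(u,v)‖ ≤ 1`, hence each term
has absolute value at most `1` and `φ_J ≤ 1`. Equality forces `‖h(e₁,e_b)‖ = 1` for `b = 2,3,4`;
the equality case of Cauchy–Schwarz then gives `e_b = e₁ h(e₁,e_b)`, so the span of the `e_a` is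
the quaternionic line `e₁ℍ`, which is invariant under right multiplication by `i, j, k`.
-/

noncomputable def hermH2 (u v : Quaternion ℝ × Quaternion ℝ) : Quaternion ℝ :=
  star u.1 * v.1 + star u.2 * v.2

noncomputable def quatLine (w : Quaternion ℝ × Quaternion ℝ) :
    Quaternion ℝ →ₗ[ℝ] Quaternion ℝ × Quaternion ℝ :=
  (LinearMap.mulLeft ℝ w.1).prod (LinearMap.mulLeft ℝ w.2)

@[simp]
lemma quatLine_apply (w : Quaternion ℝ × Quaternion ℝ) (p : Quaternion ℝ) :
    quatLine w p = (w.1 * p, w.2 * p) :=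
  rfl

namespace Quaternion

lemma real_inner_eq (a b : Quaternion ℝ) :
    ⟪a, b⟫ = a.re * b.re + a.imI * b.imI + a.imJ * b.imJ + a.imK * b.imK := by
  simp [inner_def, re_mul]

lemma real_inner_im_im (a b : Quaternion ℝ) : ⟪a.im, b.im⟫ = ⟪a, b⟫ - a.re * b.re := by
  simp only [real_inner_eq, re_im, imI_im, imJ_im, imK_im]
  ring

lemma norm_im_le (a : Quaternion ℝ) : ‖a.im‖ ≤ ‖a‖ := by
  have h := real_inner_im_im a a
  rw [real_inner_self_eq_norm_sq, real_inner_self_eq_norm_sq] at h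
  exact pow_le_pow_iff_left₀ (norm_nonneg _) (norm_nonneg _) two_ne_zero |>.mp
    (by nlinarith [sq_nonneg a.re])

lemma real_inner_mul_left (a p b : Quaternion ℝ) : ⟪a * p, b⟫ = ⟪p, star a * b⟫ := by
  simp only [real_inner_eq, re_mul, imI_mul, imJ_mul, imK_mul, re_star, imI_star, imJ_star,
    imK_star]
  ring

lemma real_inner_mul_mul_left (a p q : Quaternion ℝ) : ⟪a * p, a * q⟫ = ‖a‖ ^ 2 * ⟪p, q⟫ := by
  rw [real_inner_mul_left, ← mul_assoc, star_mul_self, coe_mul_eq_smul, real_inner_smul_right,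
    normSq_eq_norm_mul_self, sq]

end Quaternion

open Quaternion

lemma innerH2_self (u : Quaternion ℝ × Quaternion ℝ) : innerH2 u u = ‖u.1‖ ^ 2 + ‖u.2‖ ^ 2 := by
  simp [innerH2]

lemma innerH2_self_eq_zero {u : Quaternion ℝ × Quaternion ℝ} : innerH2 u u = 0 ↔ u = 0 := by
  rw [innerH2_self, add_eq_zero_iff_of_nonneg (sq_nonneg _) (sq_nonneg _)]
  simp [Prod.ext_iff]

lemma sum_omegaJ_mul_omegaJ (u v w x : Quaternion ℝ × Quaternion ℝ) :
    ∑ r : Fin 3, omegaJ r u v * omegaJ r w x = ⟪(hermH2 u v).im, (hermH2 w x).im⟫ := by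
  simp [Fin.sum_univ_three, omegaJ, innerH2, Jact, hermH2, quatUnit, real_inner_eq,
    re_mul, imI_mul, imJ_mul, imK_mul]
  ring

lemma phiJ_eq_inner_im_hermH2 (e₁ e₂ e₃ e₄ : Quaternion ℝ × Quaternion ℝ) :
    phiJ e₁ e₂ e₃ e₄ = (1 / 3) * (⟪(hermH2 e₁ e₂).im, (hermH2 e₃ e₄).im⟫
      - ⟪(hermH2 e₁ e₃).im, (hermH2 e₂ e₄).im⟫ + ⟪(hermH2 e₁ e₄).im, (hermH2 e₂ e₃).im⟫) := by
  simp only [phiJ, Finset.sum_add_distrib, Finset.sum_sub_distrib, sum_omegaJ_mul_omegaJ]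

section UnitVectors

variable {u v w x : Quaternion ℝ × Quaternion ℝ}

lemma norm_hermH2_le_one (hu : innerH2 u u = 1) (hv : innerH2 v v = 1) : ‖hermH2 u v‖ ≤ 1 := by
  rw [innerH2_self] at hu hv
  calc ‖hermH2 u v‖ ≤ ‖star u.1 * v.1‖ + ‖star u.2 * v.2‖ := norm_add_le _ _
    _ = ‖u.1‖ * ‖v.1‖ + ‖u.2‖ * ‖v.2‖ := by simp [norm_mul]
    _ ≤ 1 := by
      nlinarith [norm_nonneg u.1, norm_nonneg u.2, norm_nonneg v.1, norm_nonneg v.2,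
        sq_nonneg (‖u.1‖ * ‖v.2‖ - ‖u.2‖ * ‖v.1‖)]

lemma abs_inner_im_hermH2_le_one (hu : innerH2 u u = 1) (hv : innerH2 v v = 1)
    (hw : innerH2 w w = 1) (hx : innerH2 x x = 1) :
    |⟪(hermH2 u v).im, (hermH2 w x).im⟫| ≤ 1 :=
  calc |⟪(hermH2 u v).im, (hermH2 w x).im⟫| ≤ ‖(hermH2 u v).im‖ * ‖(hermH2 w x).im‖ :=
        abs_real_inner_le_norm _ _
    _ ≤ 1 * 1 := mul_le_mul ((norm_im_le _).trans (norm_hermH2_le_one hu hv))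
        ((norm_im_le _).trans (norm_hermH2_le_one hw hx)) (norm_nonneg _) zero_le_one
    _ = 1 := one_mul 1

lemma innerH2_quatLine (hw : innerH2 w w = 1) (p q : Quaternion ℝ) :
    innerH2 (quatLine w p) (quatLine w q) = ⟪p, q⟫ := by
  rw [innerH2_self] at hw
  simp only [quatLine_apply, innerH2, real_inner_mul_mul_left]
  linear_combination ⟪p, q⟫ * hw

lemma eq_quatLine_hermH2 (hu : innerH2 u u = 1) (hv : innerH2 v v = 1)
    (hn : ‖hermH2 u v‖ = 1) : v = quatLine u (hermH2 u v) := by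
  set q := hermH2 u v
  have hcross : innerH2 (quatLine u q) v = 1 := by
    simp only [quatLine_apply, innerH2, real_inner_mul_left, ← inner_add_right]
    change ⟪q, q⟫ = 1
    rw [real_inner_self_eq_norm_sq, hn, one_pow]
  have hdist : innerH2 (v - quatLine u q) (v - quatLine u q) = 0 := by
    have hq := innerH2_quatLine hu q q
    rw [real_inner_self_eq_norm_sq, hn, one_pow] at hq
    simp only [innerH2, Prod.fst_sub, Prod.snd_sub, inner_sub_left, inner_sub_right]
      at hv hcross hq ⊢
    linarith [real_inner_comm (quatLine u q).1 v.1, real_inner_comm (quatLine u q).2 v.2]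
  exact sub_eq_zero.mp (innerH2_self_eq_zero.mp hdist)

lemma eq_quatLine_of_abs_inner_im_hermH2_eq_one (hu : innerH2 u u = 1) (hv : innerH2 v v = 1)
    (hw : innerH2 w w = 1) (hx : innerH2 x x = 1)
    (h : |⟪(hermH2 u v).im, (hermH2 w x).im⟫| = 1) : v = quatLine u (hermH2 u v) := by
  refine eq_quatLine_hermH2 hu hv (le_antisymm (norm_hermH2_le_one hu hv) ?_)
  have := h ▸ abs_real_inner_le_norm (hermH2 u v).im (hermH2 w x).im
  nlinarith [norm_im_le (hermH2 u v), norm_im_le (hermH2 w x), norm_hermH2_le_one hw hx,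
    norm_nonneg (hermH2 u v).im, norm_nonneg (hermH2 w x).im]

end UnitVectors

lemma Jact_quatLine (r : Fin 3) (w : Quaternion ℝ × Quaternion ℝ) (p : Quaternion ℝ) :
    Jact r (quatLine w p) = quatLine w (-(p * quatUnit r)) := by
  simp [Jact, quatLine, mul_assoc]

lemma span_eq_range_quatLine {w : Quaternion ℝ × Quaternion ℝ} (hw : innerH2 w w = 1)
    {e : Fin 4 → Quaternion ℝ × Quaternion ℝ}
    (he : ∀ a b : Fin 4, innerH2 (e a) (e b) = if a = b then 1 else 0)
    {q : Fin 4 → Quaternion ℝ} (heq : ∀ a, e a = quatLine w (q a)) :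
    Submodule.span ℝ (Set.range e) = LinearMap.range (quatLine w) := by
  have hq : Orthonormal ℝ q := orthonormal_iff_ite.mpr fun a b => by
    rw [← innerH2_quatLine hw, ← heq, ← heq, he]
  have hspan : Submodule.span ℝ (Set.range q) = ⊤ :=
    hq.linearIndependent.span_eq_top_of_card_eq_finrank (by simp [finrank_eq_four])
  rw [show e = quatLine w ∘ q from funext heq, Set.range_comp, ← Submodule.map_span, hspan,
    Submodule.map_top]

/-- `φ_J` is a calibration on `ℝ⁸ = ℍ²` whose contact set is the
Grassmannian of quaternionic lines: for every orthonormal family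
`e₁,e₂,e₃,e₄` in ℍ² one has `φ_J(e₁,e₂,e₃,e₄) ≤ 1`, and if equality holds then
the real span of `e₁,e₂,e₃,e₄` is closed under `J₁, J₂, J₃`, i.e. it is a
quaternionic line. -/
theorem phiJ_calibration_contact_set (e : Fin 4 → Quaternion ℝ × Quaternion ℝ)
    (he : ∀ a b : Fin 4, innerH2 (e a) (e b) = if a = b then 1 else 0) :
    phiJ (e 0) (e 1) (e 2) (e 3) ≤ 1 ∧
    (phiJ (e 0) (e 1) (e 2) (e 3) = 1 →
      ∀ v ∈ Submodule.span ℝ (Set.range e), ∀ r : Fin 3,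
        Jact r v ∈ Submodule.span ℝ (Set.range e)) := by
  have hunit : ∀ a, innerH2 (e a) (e a) = 1 := fun a => by simpa using he a a
  have hbound : ∀ a b c d, |⟪(hermH2 (e a) (e b)).im, (hermH2 (e c) (e d)).im⟫| ≤ 1 :=
    fun a b c d => abs_inner_im_hermH2_le_one (hunit a) (hunit b) (hunit c) (hunit d)
  have hline : ∀ b c d, |⟪(hermH2 (e 0) (e b)).im, (hermH2 (e c) (e d)).im⟫| = 1 →
      e b = quatLine (e 0) (hermH2 (e 0) (e b)) :=
    fun b c d =>
      eq_quatLine_of_abs_inner_im_hermH2_eq_one (hunit 0) (hunit b) (hunit c) (hunit d)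
  rw [phiJ_eq_inner_im_hermH2]
  obtain ⟨h₁, h₁'⟩ := abs_le.mp (hbound 0 1 2 3)
  obtain ⟨h₂, h₂'⟩ := abs_le.mp (hbound 0 2 1 3)
  obtain ⟨h₃, h₃'⟩ := abs_le.mp (hbound 0 3 1 2)
  refine ⟨by linarith, fun hphi => ?_⟩
  have heq : ∀ a, e a = quatLine (e 0) (![1, hermH2 (e 0) (e 1), hermH2 (e 0) (e 2),
      hermH2 (e 0) (e 3)] a) := by
    intro a
    fin_cases a
    · simp [quatLine]
    · exact hline 1 2 3 ((abs_eq zero_le_one).mpr (Or.inl (by linarith)))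
    · exact hline 2 1 3 ((abs_eq zero_le_one).mpr (Or.inr (by linarith)))
    · exact hline 3 1 2 ((abs_eq zero_le_one).mpr (Or.inl (by linarith)))
  rw [span_eq_range_quatLine (hunit 0) he heq]
  rintro _ ⟨p, rfl⟩ r
  exact ⟨_, (Jact_quatLine r (e 0) p).symm⟩
end

section
/- The superposed harmonic function of intersecting NS-5-branes is harmonic: given finitely many triples (p₁ˢ, p₂ˢ, aˢ) ∈ ℍ × ℍ × ℍ with (p₁ˢ,p₂ˢ) ≠ (0,0) and constants c_s ∈ ℝ, the function h(x) = 1 + Σ_s c_s / ‖p₁ˢ x₁ + p₂ˢ x₂ − aˢ‖² is harmonic on the open set {x ∈ ℍ² : p₁ˢ x₁ + p₂ˢ x₂ − aˢ ≠ 0 for all s}, identifying ℍ² with ℝ⁸ via the quaternionic norm. -/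
/-!
Each summand is `g ∘ φ` with `g u = c / ‖u‖ ^ 2` on `ℍ ≅ ℝ⁴` and `φ z = p₁ z₁ + p₂ z₂ - a` affine
with linear part `L`, so its second derivative at `x` along `v` is the Hessian of `g` at `φ x`
along `L v`, namely `c (8 ⟪u, w⟫² / ‖u‖⁶ - 2 ‖w‖² / ‖u‖⁴)` with `u = φ x`, `w = L v`.
Along the directions `(e_b, 0)` we get `w = p₁ e_b`; since left multiplication by `p₁` is `‖p₁‖`
times an isometry, `∑_b ⟪u, p₁ e_b⟫² = ‖p₁‖² ‖u‖²` and `∑_b ‖p₁ e_b‖² = 4 ‖p₁‖²`, and the two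
contributions cancel exactly because `ℍ` has real dimension `4`. The same holds for `p₂`.
-/

open scoped RealInnerProductSpace Topology Quaternion

/-- The standard orthonormal basis `1, i, j, k` of the quaternions, which
identifies ℍ with ℝ⁴ (and ℍ² with ℝ⁸) via the quaternionic norm. -/
def quatBasis : Fin 4 → Quaternion ℝ :=
  ![⟨1, 0, 0, 0⟩, ⟨0, 1, 0, 0⟩, ⟨0, 0, 1, 0⟩, ⟨0, 0, 0, 1⟩]

section SecondDerivative

variable {𝕜 E F G : Type*} [NontriviallyNormedField 𝕜] [NormedAddCommGroup E] [NormedSpace 𝕜 E]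
  [NormedAddCommGroup F] [NormedSpace 𝕜 F] [NormedAddCommGroup G] [NormedSpace 𝕜 G]

theorem ContDiffAt.eventually_differentiableAt {f : E → G} {x : E}
    (hf : ContDiffAt 𝕜 2 f x) : ∀ᶠ y in 𝓝 x, DifferentiableAt 𝕜 f y :=
  (hf.eventually (by simp)).mono fun _ hy => hy.differentiableAt (by norm_num)

theorem ContDiffAt.differentiableAt_fderiv_apply {f : E → G} {x : E}
    (hf : ContDiffAt 𝕜 2 f x) (v : E) :
    DifferentiableAt 𝕜 (fun y => fderiv 𝕜 f y v) x :=
  ((hf.fderiv_right (m := 1) (by norm_num)).differentiableAt one_ne_zero).clm_apply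
    (differentiableAt_const v)

theorem fderiv_fderiv_apply_sum {ι : Type*} (t : Finset ι) {f : ι → E → G} {x : E}
    (hf : ∀ i ∈ t, ContDiffAt 𝕜 2 (f i) x) (v : E) :
    fderiv 𝕜 (fun y => fderiv 𝕜 (fun z => ∑ i ∈ t, f i z) y v) x v =
      ∑ i ∈ t, fderiv 𝕜 (fun y => fderiv 𝕜 (f i) y v) x v := by
  have hdiff : ∀ᶠ y in 𝓝 x, ∀ i ∈ t, DifferentiableAt 𝕜 (f i) y :=
    (Filter.eventually_all_finset t).2 fun i hi => (hf i hi).eventually_differentiableAt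
  have hfirst : (fun y => fderiv 𝕜 (fun z => ∑ i ∈ t, f i z) y v) =ᶠ[𝓝 x]
      fun y => ∑ i ∈ t, fderiv 𝕜 (f i) y v :=
    hdiff.mono fun y hy => by simp [fderiv_fun_sum hy]
  rw [hfirst.fderiv_eq, fderiv_fun_sum fun i hi => (hf i hi).differentiableAt_fderiv_apply v]
  simp

theorem fderiv_fderiv_apply_comp_sub_const {g : F → G} (L : E →L[𝕜] F) (a : F) {x : E}
    (hg : ContDiffAt 𝕜 2 g (L x - a)) (v : E) :
    fderiv 𝕜 (fun y => fderiv 𝕜 (fun z => g (L z - a)) y v) x v =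
      fderiv 𝕜 (fun u => fderiv 𝕜 g u (L v)) (L x - a) (L v) := by
  have hφ : ∀ y, HasFDerivAt (fun z => L z - a) L y := fun y => L.hasFDerivAt.sub_const a
  have hdiff : ∀ᶠ y in 𝓝 x, DifferentiableAt 𝕜 g (L y - a) :=
    (hφ x).continuousAt.eventually hg.eventually_differentiableAt
  have hfirst : (fun y => fderiv 𝕜 (fun z => g (L z - a)) y v) =ᶠ[𝓝 x]
      fun y => fderiv 𝕜 g (L y - a) (L v) :=
    hdiff.mono fun y hy => by
      have hcomp : HasFDerivAt (fun z => g (L z - a)) ((fderiv 𝕜 g (L y - a)).comp L) y :=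
        hy.hasFDerivAt.comp y (hφ y)
      simp only [hcomp.fderiv, ContinuousLinearMap.comp_apply]
  have hsecond : HasFDerivAt (fun y => fderiv 𝕜 g (L y - a) (L v))
      ((fderiv 𝕜 (fun u => fderiv 𝕜 g u (L v)) (L x - a)).comp L) x :=
    (hg.differentiableAt_fderiv_apply (L v)).hasFDerivAt.comp
      (g := fun u => fderiv 𝕜 g u (L v)) x (hφ x)
  rw [hfirst.fderiv_eq, hsecond.fderiv, ContinuousLinearMap.comp_apply]

end SecondDerivative

section InverseNormSq

variable {F : Type*} [NormedAddCommGroup F] [InnerProductSpace ℝ F]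

theorem contDiffAt_const_div_norm_sq {n : WithTop ℕ∞} (c : ℝ) {u : F} (hu : u ≠ 0) :
    ContDiffAt ℝ n (fun u : F => c / ‖u‖ ^ 2) u :=
  contDiffAt_const.div (contDiff_norm_sq ℝ).contDiffAt (by positivity)

theorem hasFDerivAt_const_div_norm_sq (c : ℝ) {u : F} (hu : u ≠ 0) :
    HasFDerivAt (fun u : F => c / ‖u‖ ^ 2) ((-2 * c / ‖u‖ ^ 4) • innerSL ℝ u) u := by
  have hsq : ‖u‖ ^ 2 ≠ 0 := by positivity
  have hcomp : HasFDerivAt (fun u : F => c * (‖u‖ ^ 2)⁻¹)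
      ((c * -((‖u‖ ^ 2) ^ 2)⁻¹) • (2 • innerSL ℝ u)) u :=
    ((hasDerivAt_inv hsq).const_mul c).comp_hasFDerivAt (h₂ := fun t : ℝ => c * t⁻¹) u
      (hasStrictFDerivAt_norm_sq u).hasFDerivAt
  simp only [← div_eq_mul_inv] at hcomp
  refine hcomp.congr_fderiv ?_
  ext w
  simp only [smul_apply, coe_innerSL_apply, nsmul_eq_mul, smul_eq_mul]
  ring

theorem fderiv_fderiv_apply_const_div_norm_sq (c : ℝ) {u : F} (hu : u ≠ 0) (w : F) :
    fderiv ℝ (fun y => fderiv ℝ (fun u : F => c / ‖u‖ ^ 2) y w) u w =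
      c * (8 * ⟪u, w⟫ ^ 2 / ‖u‖ ^ 6 - 2 * ‖w‖ ^ 2 / ‖u‖ ^ 4) := by
  have hfirst : (fun y => fderiv ℝ (fun u : F => c / ‖u‖ ^ 2) y w) =ᶠ[𝓝 u]
      fun y => -2 * c * ⟪w, y⟫ * (1 / ‖y‖ ^ 2) ^ 2 := by
    filter_upwards [isOpen_ne.mem_nhds hu] with y hy
    rw [(hasFDerivAt_const_div_norm_sq c hy).fderiv]
    simp only [smul_apply, coe_innerSL_apply, real_inner_comm, smul_eq_mul]
    ring
  -- `1 / ‖y‖ ^ 4 = (1 / ‖y‖ ^ 2) ^ 2` lets us reuse the first derivative of `1 / ‖y‖ ^ 2`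
  have hsecond : HasFDerivAt (fun y => -2 * c * ⟪w, y⟫ * (1 / ‖y‖ ^ 2) ^ 2) _ u :=
    (((innerSL ℝ w).hasFDerivAt (x := u)).const_mul (-2 * c)).fun_mul
      ((hasFDerivAt_const_div_norm_sq 1 hu).pow 2)
  have hu' : ‖u‖ ≠ 0 := norm_ne_zero_iff.mpr hu
  rw [hfirst.fderiv_eq, hsecond.fderiv]
  simp only [add_apply, smul_apply, coe_innerSL_apply, smul_eq_mul, nsmul_eq_mul,
    Nat.add_one_sub_one, pow_one, real_inner_comm u w, real_inner_self_eq_norm_sq]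
  field_simp
  ring

end InverseNormSq

namespace Quaternion

theorem inner_mul_left_eq_inner_star_mul (u p w : ℍ[ℝ]) : ⟪u, p * w⟫ = ⟪star p * u, w⟫ := by
  simp only [inner_def, star_mul, re_mul, imI_mul, imJ_mul, imK_mul, re_star,
    imI_star, imJ_star, imK_star]
  ring

theorem sum_inner_quatBasis_sq (q : ℍ[ℝ]) : ∑ b, ⟪q, quatBasis b⟫ ^ 2 = ‖q‖ ^ 2 := by
  simp [Fin.sum_univ_four, quatBasis, inner_def, sq, ← normSq_eq_norm_mul_self, normSq_def']

theorem norm_quatBasis_sq (b : Fin 4) : ‖quatBasis b‖ ^ 2 = 1 := by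
  rw [sq, ← normSq_eq_norm_mul_self, normSq_def']
  fin_cases b <;> simp [quatBasis]

theorem sum_inner_mul_quatBasis_sq (u p : ℍ[ℝ]) :
    ∑ b, ⟪u, p * quatBasis b⟫ ^ 2 = ‖p‖ ^ 2 * ‖u‖ ^ 2 := by
  simp only [inner_mul_left_eq_inner_star_mul, sum_inner_quatBasis_sq, norm_mul, norm_star,
    mul_pow]

theorem sum_norm_mul_quatBasis_sq (p : ℍ[ℝ]) : ∑ b, ‖p * quatBasis b‖ ^ 2 = 4 * ‖p‖ ^ 2 := by
  simp [norm_mul, mul_pow, norm_quatBasis_sq, mul_comm]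

theorem sum_fderiv_fderiv_const_div_norm_sq_mul_quatBasis (c : ℝ) {u : ℍ[ℝ]} (hu : u ≠ 0)
    (p : ℍ[ℝ]) :
    ∑ b, fderiv ℝ (fun y => fderiv ℝ (fun u : ℍ[ℝ] => c / ‖u‖ ^ 2) y (p * quatBasis b)) u
      (p * quatBasis b) = 0 := by
  have hu' : ‖u‖ ≠ 0 := norm_ne_zero_iff.mpr hu
  simp only [fderiv_fderiv_apply_const_div_norm_sq c hu, ← Finset.mul_sum,
    Finset.sum_sub_distrib, ← Finset.sum_div, sum_inner_mul_quatBasis_sq,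
    sum_norm_mul_quatBasis_sq]
  field_simp
  ring

end Quaternion

theorem superposed_ns5brane_function_harmonic_general
    (n : ℕ) (p₁ p₂ a : Fin n → Quaternion ℝ) (c : Fin n → ℝ) :
    ∀ x : Quaternion ℝ × Quaternion ℝ,
      (∀ s, p₁ s * x.1 + p₂ s * x.2 - a s ≠ 0) →
      (∑ b : Fin 4,
          fderiv ℝ
            (fun y : Quaternion ℝ × Quaternion ℝ =>
              fderiv ℝ
                (fun z : Quaternion ℝ × Quaternion ℝ =>
                  1 + ∑ s, c s / ‖p₁ s * z.1 + p₂ s * z.2 - a s‖ ^ 2)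
                y ((quatBasis b, 0) : Quaternion ℝ × Quaternion ℝ))
            x ((quatBasis b, 0) : Quaternion ℝ × Quaternion ℝ)) +
      (∑ b : Fin 4,
          fderiv ℝ
            (fun y : Quaternion ℝ × Quaternion ℝ =>
              fderiv ℝ
                (fun z : Quaternion ℝ × Quaternion ℝ =>
                  1 + ∑ s, c s / ‖p₁ s * z.1 + p₂ s * z.2 - a s‖ ^ 2)
                y ((0, quatBasis b) : Quaternion ℝ × Quaternion ℝ))
            x ((0, quatBasis b) : Quaternion ℝ × Quaternion ℝ)) = 0 := by
  intro x hx
  let L : Fin n → ℍ[ℝ] × ℍ[ℝ] →L[ℝ] ℍ[ℝ] := fun s =>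
    (ContinuousLinearMap.mul ℝ ℍ[ℝ] (p₁ s)).coprod (ContinuousLinearMap.mul ℝ ℍ[ℝ] (p₂ s))
  let g : Fin n → ℍ[ℝ] → ℝ := fun s u => c s / ‖u‖ ^ 2
  have hsecond : ∀ v, fderiv ℝ (fun y => fderiv ℝ (fun z : ℍ[ℝ] × ℍ[ℝ] =>
      1 + ∑ s, c s / ‖p₁ s * z.1 + p₂ s * z.2 - a s‖ ^ 2) y v) x v =
      ∑ s, fderiv ℝ (fun u => fderiv ℝ (g s) u (L s v)) (L s x - a s) (L s v) := by
    intro v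
    have hg : ∀ s, ContDiffAt ℝ 2 (g s) (L s x - a s) := fun s =>
      contDiffAt_const_div_norm_sq (c s) (hx s)
    have hgL : ∀ s ∈ Finset.univ, ContDiffAt ℝ 2 (fun z => g s (L s z - a s)) x := fun s _ =>
      (hg s).comp (g := g s) x ((L s).contDiff.sub contDiff_const).contDiffAt
    simp only [fderiv_const_add]
    exact (fderiv_fderiv_apply_sum _ hgL v).trans (Finset.sum_congr rfl fun s _ =>
      fderiv_fderiv_apply_comp_sub_const (L s) (a s) (hg s) v)
  simp only [hsecond]
  rw [Finset.sum_comm, Finset.sum_comm (s := Finset.univ (α := Fin 4)),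
    ← Finset.sum_add_distrib]
  refine Finset.sum_eq_zero fun s _ => ?_
  simp only [L, g, ContinuousLinearMap.coprod_apply, ContinuousLinearMap.mul_apply', mul_zero,
    add_zero, zero_add]
  rw [Quaternion.sum_fderiv_fderiv_const_div_norm_sq_mul_quatBasis (c s) (hx s),
    Quaternion.sum_fderiv_fderiv_const_div_norm_sq_mul_quatBasis (c s) (hx s), add_zero]

/-- Given finitely many triples `(p₁ˢ, p₂ˢ, aˢ)` with
`(p₁ˢ,p₂ˢ) ≠ (0,0)` and constants `c_s ∈ ℝ`, the superposed harmonic function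
`h(x) = 1 + Σ_s c_s / ‖p₁ˢ x₁ + p₂ˢ x₂ - aˢ‖²` of intersecting NS-5-branes is
harmonic on `{x ∈ ℍ² : p₁ˢ x₁ + p₂ˢ x₂ - aˢ ≠ 0 for all s}`: the sum of its
second derivatives along the eight coordinate directions of `ℍ² ≅ ℝ⁸`
vanishes there. -/
theorem superposed_ns5brane_function_harmonic
    (n : ℕ) (p₁ p₂ a : Fin n → Quaternion ℝ) (c : Fin n → ℝ)
    (hp : ∀ s, (p₁ s, p₂ s) ≠ (0, 0)) :
    ∀ x : Quaternion ℝ × Quaternion ℝ,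
      (∀ s, p₁ s * x.1 + p₂ s * x.2 - a s ≠ 0) →
      (∑ b : Fin 4,
          fderiv ℝ
            (fun y : Quaternion ℝ × Quaternion ℝ =>
              fderiv ℝ
                (fun z : Quaternion ℝ × Quaternion ℝ =>
                  1 + ∑ s, c s / ‖p₁ s * z.1 + p₂ s * z.2 - a s‖ ^ 2)
                y ((quatBasis b, 0) : Quaternion ℝ × Quaternion ℝ))
            x ((quatBasis b, 0) : Quaternion ℝ × Quaternion ℝ)) +
      (∑ b : Fin 4,
          fderiv ℝ
            (fun y : Quaternion ℝ × Quaternion ℝ =>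
              fderiv ℝ
                (fun z : Quaternion ℝ × Quaternion ℝ =>
                  1 + ∑ s, c s / ‖p₁ s * z.1 + p₂ s * z.2 - a s‖ ^ 2)
                y ((0, quatBasis b) : Quaternion ℝ × Quaternion ℝ))
            x ((0, quatBasis b) : Quaternion ℝ × Quaternion ℝ)) = 0 :=
  superposed_ns5brane_function_harmonic_general n p₁ p₂ a c
end
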